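/- arXiv:2204.13215 — 2 statements merged into one kernel-verified Lean document; each statement's English description precedes it below -/
import Mathlib

section
/- For every LTS L, every φ ∈ L(F_p^∞) and every k ∈ ℕ, the set {ρ : ρ is a run of L and (ρ,k) ⊭ φ} is an open subset of the set of runs of L, in the subspace topology inherited from the product topology on S^ℕ with S discrete. -/
open scoped Classical
open MeasureTheory

/-- A labelled transition system: a finite set of states `S`, an initial state,
a transition relation in which every state has at least one successor, and a
labeling of states by sets of atomic propositions. -/
structure LTS (S AP : Type) where
  init : S
  T : S → S → Prop
  lbl : S → Set AP
  succ_nonempty : ∀ s : S, ∃ t : S, T s t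

variable {S AP : Type}

/-- A run of an LTS: an infinite sequence of states following the transitions. -/
def IsRun (L : LTS S AP) (ρ : ℕ → S) : Prop := ∀ i : ℕ, L.T (ρ i) (ρ (i + 1))

/-- The shifted run `ρ[i..]`. -/
def shift (ρ : ℕ → S) (i : ℕ) : ℕ → S := fun n => ρ (n + i)

/-- Formulas of the prompt Muller fragment `L(F_p^∞)`:
`φ ::= α | ¬α | φ ∨ φ | φ ∧ φ | F_p^∞ φ`. -/
inductive PM (AP : Type) : Type where
  | pos : AP → PM AP
  | neg : AP → PM AP
  | or : PM AP → PM AP → PM AP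
  | and : PM AP → PM AP → PM AP
  | finf : PM AP → PM AP

/-- Satisfaction `(ρ, k) ⊨ φ` of a prompt Muller formula by a run at bound `k`. -/
def Sat (L : LTS S AP) : PM AP → (ℕ → S) → ℕ → Prop
  | .pos a, ρ, _ => a ∈ L.lbl (ρ 0)
  | .neg a, ρ, _ => a ∉ L.lbl (ρ 0)
  | .or φ ψ, ρ, k => Sat L φ ρ k ∨ Sat L ψ ρ k
  | .and φ ψ, ρ, k => Sat L φ ρ k ∧ Sat L ψ ρ k
  | .finf φ, ρ, k => ∀ i : ℕ, ∃ j ≤ k, Sat L φ (shift ρ (i + j)) k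

lemma sat_isClosed [TopologicalSpace S] [DiscreteTopology S]
    (L : LTS S AP) (φ : PM AP) (k : ℕ) :
    IsClosed {ρ : ℕ → S | Sat L φ ρ k} := by
  induction φ with
  | pos a =>
      show IsClosed ((fun ρ : ℕ → S => ρ 0) ⁻¹' {s : S | a ∈ L.lbl s})
      exact (isClosed_discrete _).preimage (continuous_apply 0)
  | neg a =>
      show IsClosed ((fun ρ : ℕ → S => ρ 0) ⁻¹' {s : S | a ∉ L.lbl s})
      exact (isClosed_discrete _).preimage (continuous_apply 0)
  | or φ ψ ihφ ihψ => exact ihφ.union ihψ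
  | and φ ψ ihφ ihψ => exact ihφ.inter ihψ
  | finf φ ih =>
      have hshift : ∀ m : ℕ, Continuous (fun ρ : ℕ → S => shift ρ m) := by
        intro m
        exact continuous_pi fun n => continuous_apply (n + m)
      have : {ρ : ℕ → S | Sat L (.finf φ) ρ k}
          = ⋂ i : ℕ, ⋃ j ∈ Finset.range (k + 1),
              (fun ρ : ℕ → S => shift ρ (i + j)) ⁻¹' {ρ | Sat L φ ρ k} := by
        ext ρ
        simp only [Sat, Set.mem_setOf_eq, Set.mem_iInter, Set.mem_iUnion,
          Finset.mem_range, Nat.lt_succ_iff, Set.mem_preimage, exists_prop]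
      rw [this]
      refine isClosed_iInter fun i => ?_
      exact (Finset.range (k + 1)).finite_toSet.isClosed_biUnion
        fun j _ => ih.preimage (hshift (i + j))

/-- For every LTS `L`, `φ ∈ L(F_p^∞)` and `k`, the set of runs of
`L` violating `φ` at bound `k` is open in the subspace topology inherited from the
product topology on `S^ℕ`, with `S` discrete. -/
theorem counterexamples_isOpen [Fintype S] [TopologicalSpace S] [DiscreteTopology S]
    (L : LTS S AP) (φ : PM AP) (k : ℕ) :
    IsOpen {ρ : {ρ : ℕ → S // IsRun L ρ} | ¬ Sat L φ ρ.1 k} := by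
  have := (sat_isClosed L φ k).isOpen_compl
  exact this.preimage continuous_subtype_val
end

section
/- Weak and strong prompt semantics coincide for initialized formulas: let L be any LTS and ψ ∈ L⁺(F_p^∞). Then there exists k ∈ ℕ such that every initialized run ρ satisfies (ρ,k) ⊨ F ψ, if and only if for every initialized run ρ there exists k ∈ ℕ with (ρ,k) ⊨ F ψ. -/
open scoped Classical
open MeasureTheory

variable {S AP : Type}

/-- The positive fragment `L⁺(F_p^∞)`: the smallest set of formulas containing
`F_p^∞ φ` for every formula `φ` and closed under `∨`, `∧` and `F_p^∞`. -/
inductive Positive {AP : Type} : PM AP → Prop where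
  | finf (φ : PM AP) : Positive (.finf φ)
  | or {φ ψ : PM AP} : Positive φ → Positive ψ → Positive (.or φ ψ)
  | and {φ ψ : PM AP} : Positive φ → Positive ψ → Positive (.and φ ψ)

/-- Satisfaction `(ρ, k) ⊨ F ψ`: some suffix of `ρ` satisfies `ψ` at bound `k`. -/
def SatF (L : LTS S AP) (ψ : PM AP) (ρ : ℕ → S) (k : ℕ) : Prop :=
  ∃ i : ℕ, Sat L ψ (shift ρ i) k

/-- `Sat` is monotone in the bound `k`. -/
theorem sat_mono (L : LTS S AP) (φ : PM AP) :
    ∀ (ρ : ℕ → S) {k k' : ℕ}, k ≤ k' → Sat L φ ρ k → Sat L φ ρ k' := by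
  induction φ with
  | pos a => intro ρ k k' _ h; exact h
  | neg a => intro ρ k k' _ h; exact h
  | or φ ψ ih1 ih2 =>
      intro ρ k k' hkk h
      rcases h with h | h
      · exact Or.inl (ih1 ρ hkk h)
      · exact Or.inr (ih2 ρ hkk h)
  | and φ ψ ih1 ih2 =>
      intro ρ k k' hkk h
      exact ⟨ih1 ρ hkk h.1, ih2 ρ hkk h.2⟩
  | finf φ ih =>
      intro ρ k k' hkk h i
      obtain ⟨j, hj, hs⟩ := h i
      exact ⟨j, hj.trans hkk, ih _ hkk hs⟩

/-- Failure of `Sat` is witnessed by a finite prefix. -/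
theorem sat_open (L : LTS S AP) (φ : PM AP) :
    ∀ (ρ : ℕ → S) (k : ℕ), ¬ Sat L φ ρ k →
      ∃ N : ℕ, ∀ σ : ℕ → S, (∀ l, l < N → σ l = ρ l) → ¬ Sat L φ σ k := by
  induction φ with
  | pos a =>
      intro ρ k h
      refine ⟨1, fun σ hσ hs => h ?_⟩
      have e : σ 0 = ρ 0 := hσ 0 (by omega)
      simp only [Sat] at hs ⊢
      rwa [e] at hs
  | neg a =>
      intro ρ k h
      refine ⟨1, fun σ hσ hs => h ?_⟩
      have e : σ 0 = ρ 0 := hσ 0 (by omega)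
      simp only [Sat] at hs ⊢
      rwa [e] at hs
  | or φ ψ ih1 ih2 =>
      intro ρ k h
      have h1 : ¬ Sat L φ ρ k := fun hs => h (Or.inl hs)
      have h2 : ¬ Sat L ψ ρ k := fun hs => h (Or.inr hs)
      obtain ⟨N1, hN1⟩ := ih1 ρ k h1
      obtain ⟨N2, hN2⟩ := ih2 ρ k h2
      refine ⟨max N1 N2, fun σ hσ hs => ?_⟩
      rcases hs with hs | hs
      · exact hN1 σ (fun l hl => hσ l (lt_of_lt_of_le hl (le_max_left _ _))) hs
      · exact hN2 σ (fun l hl => hσ l (lt_of_lt_of_le hl (le_max_right _ _))) hs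
  | and φ ψ ih1 ih2 =>
      intro ρ k h
      by_cases h1 : Sat L φ ρ k
      · have h2 : ¬ Sat L ψ ρ k := fun hs => h ⟨h1, hs⟩
        obtain ⟨N2, hN2⟩ := ih2 ρ k h2
        exact ⟨N2, fun σ hσ hs => hN2 σ hσ hs.2⟩
      · obtain ⟨N1, hN1⟩ := ih1 ρ k h1
        exact ⟨N1, fun σ hσ hs => hN1 σ hσ hs.1⟩
  | finf φ ih =>
      intro ρ k h
      have h' : ∃ i : ℕ, ∀ j, j ≤ k → ¬ Sat L φ (shift ρ (i + j)) k := by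
        by_contra hc
        push_neg at hc
        exact h fun i => by
          obtain ⟨j, hj, hs⟩ := hc i
          exact ⟨j, hj, hs⟩
      obtain ⟨i, hi⟩ := h'
      have H : ∀ j, j ≤ k → ∃ N : ℕ, ∀ σ : ℕ → S,
          (∀ l, l < N → σ l = shift ρ (i + j) l) → ¬ Sat L φ σ k :=
        fun j hj => ih _ k (hi j hj)
      set g : ℕ → ℕ := fun j => if hj : j ≤ k then (H j hj).choose else 0 with hg
      set M : ℕ := (Finset.range (k + 1)).sup g with hM
      refine ⟨i + k + 1 + M, fun σ hσ hs => ?_⟩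
      obtain ⟨j, hj, hsj⟩ := hs i
      have hgj : g j = (H j hj).choose := by simp [hg, hj]
      have hgle : g j ≤ M := by
        rw [hM]
        exact Finset.le_sup (Finset.mem_range.mpr (by omega))
      refine (H j hj).choose_spec (shift σ (i + j)) (fun l hl => ?_) hsj
      have hl' : l < g j := by rw [hgj]; exact hl
      have : l + (i + j) < i + k + 1 + M := by omega
      show σ (l + (i + j)) = ρ (l + (i + j))
      exact hσ _ this

/-- Positive formulas are preserved by shifting. -/
theorem sat_shift (L : LTS S AP) {ψ : PM AP} (hψ : Positive ψ) :
    ∀ (ρ : ℕ → S) (k m : ℕ), Sat L ψ ρ k → Sat L ψ (shift ρ m) k := by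
  induction hψ with
  | finf φ =>
      intro ρ k m h i
      obtain ⟨j, hj, hs⟩ := h (m + i)
      refine ⟨j, hj, ?_⟩
      have e : shift (shift ρ m) (i + j) = shift ρ (m + i + j) := by
        funext n
        show ρ (n + (i + j) + m) = ρ (n + (m + i + j))
        exact congrArg ρ (by omega)
      rw [e]
      exact hs
  | or h1 h2 ih1 ih2 =>
      intro ρ k m h
      rcases h with h | h
      · exact Or.inl (ih1 ρ k m h)
      · exact Or.inr (ih2 ρ k m h)
  | and h1 h2 ih1 ih2 =>
      intro ρ k m h
      exact ⟨ih1 ρ k m h.1, ih2 ρ k m h.2⟩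

/-- Pigeonhole: any sequence into a finite type has a value attained
at arbitrarily large indices. -/
theorem exists_infinite_fiber_of_fintype [Fintype S] (f : ℕ → S) :
    ∃ s : S, ∀ n : ℕ, ∃ m : ℕ, n ≤ m ∧ f m = s := by
  by_contra h
  push_neg at h
  choose g hg using h
  set N := Finset.univ.sup g with hN
  exact hg (f N) N (by rw [hN]; exact Finset.le_sup (Finset.mem_univ _)) rfl

/-- Key construction: from a family of initialized runs, where the `k`-th run is
everywhere bad at level `k`, build a single initialized run bad at every level. -/
theorem key_splice [Fintype S] (L : LTS S AP) (ψ : PM AP) (hψ : Positive ψ)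
    (F : ℕ → ℕ → S) (hrun : ∀ k, IsRun L (F k)) (hinit : ∀ k, F k 0 = L.init)
    (hbad : ∀ k i, ¬ Sat L ψ (shift (F k) i) k) :
    ∃ ρ : ℕ → S, IsRun L ρ ∧ ρ 0 = L.init ∧ ∀ k, ¬ SatF L ψ ρ k := by
  -- pigeonhole: a common state `s` visited infinitely often by runs of
  -- arbitrarily high level
  have h1 : ∀ k : ℕ, ∃ s : S, ∀ n : ℕ, ∃ m : ℕ, n ≤ m ∧ F k m = s :=
    fun k => exists_infinite_fiber_of_fintype (F k)
  choose sk hsk using h1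
  obtain ⟨s, hs⟩ := exists_infinite_fiber_of_fintype sk
  have hlev : ∀ t : ℕ, ∃ k : ℕ, t ≤ k ∧ ∀ n : ℕ, ∃ m : ℕ, n ≤ m ∧ F k m = s := by
    intro t
    obtain ⟨k, htk, hks⟩ := hs t
    exact ⟨k, htk, by rw [← hks]; exact hsk k⟩
  -- invariants and step relation
  set Inv : (ℕ → S) × ℕ → Prop :=
    fun p => IsRun L p.1 ∧ p.1 0 = L.init ∧ p.1 p.2 = s with hInvDef
  set Good : ℕ → (ℕ → S) × ℕ → (ℕ → S) × ℕ → Prop :=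
    fun t p q => (∀ j, j ≤ p.2 → q.1 j = p.1 j) ∧ p.2 < q.2 ∧
      (∀ σ : ℕ → S, (∀ j, j < q.2 → σ j = q.1 j) → ¬ Sat L ψ (shift σ p.2) t)
    with hGoodDef
  -- the key splicing step
  have step : ∀ (t : ℕ) (p : (ℕ → S) × ℕ), ∃ q : (ℕ → S) × ℕ,
      Inv p → (Inv q ∧ Good t p q) := by
    intro t p
    by_cases hp : Inv p
    swap
    · exact ⟨p, fun h => absurd h hp⟩
    obtain ⟨hprun, hpinit, hps⟩ := hp
    obtain ⟨k, htk, hk⟩ := hlev t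
    obtain ⟨m, -, hms⟩ := hk 0
    obtain ⟨N, hN⟩ := sat_open L ψ (shift (F k) m) k (hbad k m)
    obtain ⟨m', hm', hm's⟩ := hk (m + N + 1)
    set τ := p.1 with hτ
    set n := p.2 with hn
    set τ' : ℕ → S := fun j => if j < n then τ j else F k (m + (j - n)) with hτ'
    have hagree : ∀ j, j ≤ n → τ' j = τ j := by
      intro j hj
      rcases lt_or_eq_of_le hj with h | h
      · simp [hτ', h]
      · subst h
        simp only [hτ', lt_irrefl, if_neg (lt_irrefl n)]
        rw [Nat.sub_self, Nat.add_zero, hms, hps]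
    have hτ'run : IsRun L τ' := by
      intro j
      rcases lt_trichotomy (j + 1) n with h | h | h
      · have hj : j < n := by omega
        simpa [hτ', hj, h] using hprun j
      · have hj : j < n := by omega
        have e1 : τ' j = τ j := by simp [hτ', hj]
        have e2 : τ' (j + 1) = F k m := by
          simp only [hτ', if_neg (by omega : ¬ j + 1 < n)]
          rw [h, Nat.sub_self, Nat.add_zero]
        rw [e1, e2, hms]
        have hp := hprun j
        rwa [h, hps] at hp
      · have hj : ¬ j < n := by omega
        have e1 : τ' j = F k (m + (j - n)) := by simp [hτ', hj]
        have e2 : τ' (j + 1) = F k (m + (j - n) + 1) := by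
          simp only [hτ', if_neg (by omega : ¬ j + 1 < n)]
          exact congrArg (F k) (by omega)
        rw [e1, e2]
        exact hrun k (m + (j - n))
    refine ⟨(τ', n + (m' - m)), fun _ => ⟨⟨hτ'run, ?_, ?_⟩, hagree, by omega, ?_⟩⟩
    · show τ' 0 = L.init
      rw [hagree 0 (Nat.zero_le _)]; exact hpinit
    · show τ' (n + (m' - m)) = s
      simp only [hτ', if_neg (by omega : ¬ n + (m' - m) < n)]
      rw [show m + (n + (m' - m) - n) = m' by omega]
      exact hm's
    · intro σ hσ hsat
      have hsk' : Sat L ψ (shift σ n) k := sat_mono L ψ _ htk hsat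
      refine hN (shift σ n) (fun l hl => ?_) hsk'
      show σ (l + n) = F k (l + m)
      rw [hσ (l + n) (by omega)]
      simp only [hτ', if_neg (by omega : ¬ l + n < n)]
      exact congrArg (F k) (by omega)
  -- build the sequence of approximations
  obtain ⟨k₀, -, hk₀⟩ := hlev 0
  obtain ⟨m₀, -, hm₀⟩ := hk₀ 0
  set p₀ : (ℕ → S) × ℕ := (F k₀, m₀) with hp₀
  set f : ℕ → (ℕ → S) × ℕ :=
    fun t => Nat.rec p₀ (fun t p => (step t p).choose) t with hf
  have hfsucc : ∀ t, f (t + 1) = (step t (f t)).choose := fun t => rfl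
  have hInv : ∀ t, Inv (f t) := by
    intro t
    induction t with
    | zero => exact ⟨hrun k₀, hinit k₀, hm₀⟩
    | succ t ih =>
        rw [hfsucc t]
        exact ((step t (f t)).choose_spec ih).1
  have hGood : ∀ t, Good t (f t) (f (t + 1)) := by
    intro t
    rw [hfsucc t]
    exact ((step t (f t)).choose_spec (hInv t)).2
  set n : ℕ → ℕ := fun t => (f t).2 with hnd
  set τ : ℕ → ℕ → S := fun t => (f t).1 with hτd
  have hnlt : ∀ t, n t < n (t + 1) := fun t => (hGood t).2.1
  have hnmono : ∀ a b : ℕ, a ≤ b → n a ≤ n b := by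
    intro a b h
    induction h with
    | refl => exact le_refl _
    | step _ ih => exact ih.trans (le_of_lt (hnlt _))
  have hge : ∀ t, t ≤ n t := by
    intro t
    induction t with
    | zero => exact Nat.zero_le _
    | succ t ih => exact Nat.succ_le_of_lt (lt_of_le_of_lt ih (hnlt t))
  have hag : ∀ a b : ℕ, a ≤ b → ∀ j, j ≤ n a → τ b j = τ a j := by
    intro a b h
    induction h with
    | refl => intro j _; rfl
    | @step b hab ih =>
        intro j hj
        have h1 : τ (b + 1) j = τ b j :=
          (hGood b).1 j (hj.trans (hnmono _ _ hab))
        exact h1.trans (ih j hj)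
  set R : ℕ → S := fun j => τ (j + 1) j with hR
  have hA : ∀ t j, j ≤ n t → τ t j = R j := by
    intro t j hj
    show τ t j = τ (j + 1) j
    rcases le_total t (j + 1) with h | h
    · exact (hag t (j + 1) h j hj).symm
    · exact hag (j + 1) t h j (le_trans (Nat.le_succ j) (hge (j + 1)))
  have hRrun : IsRun L R := by
    intro j
    have h1 : j ≤ n (j + 2) := le_trans (by omega) (hge (j + 2))
    have h2 : j + 1 ≤ n (j + 2) := le_trans (by omega) (hge (j + 2))
    rw [← hA (j + 2) j h1, ← hA (j + 2) (j + 1) h2]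
    exact (hInv (j + 2)).1 j
  have hRinit : R 0 = L.init := by
    have := hA 0 0 (Nat.zero_le _)
    rw [← this]
    exact (hInv 0).2.1
  refine ⟨R, hRrun, hRinit, ?_⟩
  rintro k ⟨i, hi⟩
  set t := max k i with ht
  have hkt : k ≤ t := le_max_left _ _
  have hit : i ≤ n t := le_trans (le_max_right _ _) (hge t)
  have h1 : Sat L ψ (shift R (n t)) k := by
    have := sat_shift L hψ (shift R i) k (n t - i) hi
    have e : shift (shift R i) (n t - i) = shift R (n t) := by
      funext m'
      show R (m' + (n t - i) + i) = R (m' + n t)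
      exact congrArg R (by omega)
    rwa [e] at this
  have h2 : Sat L ψ (shift R (n t)) t := sat_mono L ψ _ hkt h1
  exact (hGood t).2.2 R (fun j hj => (hA (t + 1) j (le_of_lt hj)).symm) h2

/-- Weak and strong prompt semantics coincide for initialized
formulas: for any LTS `L` and `ψ ∈ L⁺(F_p^∞)`, there is `k` such that every
initialized run satisfies `(ρ,k) ⊨ F ψ` iff every initialized run satisfies
`(ρ,k) ⊨ F ψ` for some `k` (depending on the run). -/
theorem weak_eq_strong_initialized [Fintype S] (L : LTS S AP) (ψ : PM AP)
    (hψ : Positive ψ) :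
    (∃ k : ℕ, ∀ ρ : ℕ → S, IsRun L ρ → ρ 0 = L.init → SatF L ψ ρ k) ↔
    (∀ ρ : ℕ → S, IsRun L ρ → ρ 0 = L.init → ∃ k : ℕ, SatF L ψ ρ k) := by
  constructor
  · rintro ⟨k, h⟩ ρ hr hi
    exact ⟨k, h ρ hr hi⟩
  · intro hall
    by_contra hno
    push_neg at hno
    choose F h1 h2 h3 using hno
    have hbad : ∀ k i, ¬ Sat L ψ (shift (F k) i) k :=
      fun k i hsat => h3 k ⟨i, hsat⟩
    obtain ⟨ρ, hr, hi, hb⟩ := key_splice L ψ hψ F h1 h2 hbad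
    obtain ⟨k, hk⟩ := hall ρ hr hi
    exact hb k hk
end
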